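/- arXiv:1602.06921 — 4 statements merged into one kernel-verified Lean document; each statement's English description precedes it below -/
import Mathlib

section
/- For the element ω ∈ Sⁿ(g*) with ω(ξ_{i₁}⋯ξ_{iₙ}) ≠ 0, consider the trivial bundle ℝ^{2n} × G → ℝ^{2n} with the connection Θ whose pullback along the canonical section is x¹dx² ξ_{i₁} + ⋯ + x^{2n−1}dx^{2n} ξ_{iₙ}. Then the Chern–Weil form ω(Ω^{∧n}) ∈ Ω^{2n}(ℝ^{2n}), evaluated at the origin on the coordinate vectors ∂₁,…,∂_{2n}, equals n!·ω(ξ_{i₁}⋯ξ_{iₙ}), which is nonzero. Consequently, the Weil homomorphism W(g) → Ω(EG) is injective. -/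
open scoped BigOperators

/-!  Let `𝔤` be the Lie algebra of a Lie group `G`, `ξ : Fin n → 𝔤` the chosen
basis vectors `ξ_{i₁}, …, ξ_{iₙ}`, and `ω ∈ Sⁿ(𝔤*)` a symmetric `n`-multilinear
form.  On the trivial principal `G`-bundle `ℝ^{2n} × G → ℝ^{2n}` we take the
connection whose pullback along the canonical section is
`Θ = x¹dx² ξ_{i₁} + ⋯ + x^{2n-1}dx^{2n} ξ_{iₙ}` (coordinates indexed by
`Fin (2n)`, with `x^{2m-1} = x (2m)` and `x^{2m} = x (2m+1)` in 0-based
indexing), with curvature `Ω = dΘ + ½[Θ ∧ Θ]`.  The Chern–Weil `2n`-form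
`ω(Ω^{∧n})` is evaluated on tangent vectors by the alternating sum over
permutations (with the normalization `2⁻ⁿ`). -/

variable (𝔤 : Type) [LieRing 𝔤] [LieAlgebra ℝ 𝔤]

/-- first index of the `m`-th coordinate pair -/
def idx1 (n : ℕ) (m : Fin n) : Fin (2 * n) := ⟨2 * m.1, by omega⟩

/-- second index of the `m`-th coordinate pair -/
def idx2 (n : ℕ) (m : Fin n) : Fin (2 * n) := ⟨2 * m.1 + 1, by omega⟩

/-- the connection 1-form `Θ = Σ_m x^{2m-1} dx^{2m} ξ_m` at the point `x`,
evaluated on the tangent vector `v`. -/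
def conn (n : ℕ) (ξ : Fin n → 𝔤) (x v : Fin (2 * n) → ℝ) : 𝔤 :=
  ∑ m : Fin n, (x (idx1 n m) * v (idx2 n m)) • ξ m

/-- the curvature `Ω = dΘ + ½[Θ ∧ Θ]` at the point `x`, evaluated on the tangent
vectors `v, w` (note `½[Θ∧Θ](v,w) = [Θv, Θw]`). -/
def curv (n : ℕ) (ξ : Fin n → 𝔤) (x v w : Fin (2 * n) → ℝ) : 𝔤 :=
  (∑ m : Fin n, (v (idx1 n m) * w (idx2 n m) - w (idx1 n m) * v (idx2 n m)) • ξ m) +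
    ⁅conn 𝔤 n ξ x v, conn 𝔤 n ξ x w⁆

/-- the Chern–Weil form `ω(Ω^{∧n})` at the point `x`, evaluated on the tangent
vectors `v 0, …, v (2n-1)`. -/
noncomputable def chernWeilForm (n : ℕ) (ξ : Fin n → 𝔤)
    (ω : MultilinearMap ℝ (fun _ : Fin n => 𝔤) ℝ)
    (x : Fin (2 * n) → ℝ) (v : Fin (2 * n) → Fin (2 * n) → ℝ) : ℝ :=
  ((2 : ℝ) ^ n)⁻¹ *
    ∑ σ : Equiv.Perm (Fin (2 * n)),
      (Equiv.Perm.sign σ : ℤ) *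
        ω (fun m => curv 𝔤 n ξ x (v (σ (idx1 n m))) (v (σ (idx2 n m))))

/-! At the origin the connection vanishes, so `Ω = dΘ` there and `Ω(∂_a, ∂_b)` is `±ξ_k` when
`{a, b}` is the coordinate pair `{2k, 2k+1}` and `0` otherwise. In the alternating sum only the
permutations mapping coordinate pairs to coordinate pairs survive; identifying `Fin (2n)` with
`Fin n × Fin 2`, these are the wreath products of some `τ ∈ Sₙ` with a flip or no flip inside
each pair. The sign of such a permutation is the product of the signs of the flips, which cancels
the signs of the curvature values, and the symmetry of `ω` absorbs `τ`; so each of the `n!·2ⁿ`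
surviving terms equals `ω(ξ)`. -/

namespace Equiv.Perm

variable {α β : Type*}

/-- `(a, b) ↦ (τ a, f a b)` -/
def wreath (τ : Perm α) (f : α → Perm β) : Perm (α × β) :=
  prodCongrLeft (fun _ => τ) * prodCongrRight f

lemma sign_wreath [Fintype α] [Fintype β] [DecidableEq α] [DecidableEq β]
    (τ : Perm α) (f : α → Perm β) :
    sign (wreath τ f) = sign τ ^ Fintype.card β * ∏ a, sign (f a) := by
  rw [wreath, map_mul, sign_prodCongrLeft, sign_prodCongrRight, Finset.prod_const,
    Finset.card_univ]

lemma wreath_injective [Nonempty β] :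
    Function.Injective (Function.uncurry (wreath : Perm α → (α → Perm β) → Perm (α × β))) := by
  rintro ⟨τ, f⟩ ⟨τ', f'⟩ h
  have hab : ∀ a b, τ a = τ' a ∧ f a b = f' a b := fun a b =>
    Prod.ext_iff.mp congr($h (a, b))
  obtain ⟨b₀⟩ := ‹Nonempty β›
  exact Prod.ext (Equiv.ext fun a => (hab a b₀).1)
    (funext fun a => Equiv.ext fun b => (hab a b).2)

lemma exists_wreath_eq [Finite α] [Finite β] [Nonempty β] (σ : Perm (α × β))
    (hσ : ∀ a b b', (σ (a, b)).1 = (σ (a, b')).1) : ∃ τ f, wreath τ f = σ := by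
  obtain ⟨b₀⟩ := ‹Nonempty β›
  set t : α → α := fun a => (σ (a, b₀)).1
  have ht : ∀ a b, (σ (a, b)).1 = t a := fun a b => hσ a b b₀
  have t_surjective : Function.Surjective t := fun k =>
    ⟨(σ.symm (k, b₀)).1, by rw [← ht _ (σ.symm (k, b₀)).2, Prod.mk.eta, apply_symm_apply]⟩
  have fibre_injective : ∀ a, Function.Injective fun b => (σ (a, b)).2 := fun a b b' h =>
    (Prod.mk.inj (σ.injective (Prod.ext ((ht a b).trans (ht a b').symm) h))).2
  refine ⟨ofBijective t (Finite.injective_iff_bijective.mp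
      (Finite.injective_iff_surjective.mpr t_surjective)),
    fun a => ofBijective _ (Finite.injective_iff_bijective.mp (fibre_injective a)), ?_⟩
  ext1 ⟨a, b⟩
  exact Prod.ext (ht a b).symm rfl

end Equiv.Perm

section

open Equiv Equiv.Perm

def coordPairEquiv (n : ℕ) : Fin n × Fin 2 ≃ Fin (2 * n) :=
  finProdFinEquiv.trans (finCongr (Nat.mul_comm n 2))

lemma coordPairEquiv_zero (n : ℕ) (m : Fin n) : coordPairEquiv n (m, 0) = idx1 n m := by
  ext; simp [coordPairEquiv, idx1]

lemma coordPairEquiv_one (n : ℕ) (m : Fin n) : coordPairEquiv n (m, 1) = idx2 n m := by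
  ext; simp [coordPairEquiv, idx2]; omega

lemma single_coordPairEquiv_apply {n : ℕ} (p q : Fin n × Fin 2) :
    (Pi.single (coordPairEquiv n p) 1 : Fin (2 * n) → ℝ) (coordPairEquiv n q) =
      if q = p then 1 else 0 := by
  simp only [Pi.single_apply, EmbeddingLike.apply_eq_iff_eq]

variable (n : ℕ) (ξ : Fin n → 𝔤) (ω : MultilinearMap ℝ (fun _ : Fin n => 𝔤) ℝ)

lemma curv_zero (v w : Fin (2 * n) → ℝ) :
    curv 𝔤 n ξ 0 v w =
      ∑ m, (v (idx1 n m) * w (idx2 n m) - w (idx1 n m) * v (idx2 n m)) • ξ m := by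
  simp [curv, conn]

lemma curv_zero_single_of_fst_ne {p q : Fin n × Fin 2} (h : p.1 ≠ q.1) :
    curv 𝔤 n ξ 0 (Pi.single (coordPairEquiv n p) 1) (Pi.single (coordPairEquiv n q) 1) = 0 := by
  obtain ⟨k, i⟩ := p
  obtain ⟨k', j⟩ := q
  rw [curv_zero]
  refine Finset.sum_eq_zero fun m _ => ?_
  simp only [← coordPairEquiv_zero, ← coordPairEquiv_one, single_coordPairEquiv_apply]
  split_ifs <;> simp_all

lemma curv_zero_single_perm (k : Fin n) (f : Perm (Fin 2)) :
    curv 𝔤 n ξ 0 (Pi.single (coordPairEquiv n (k, f 0)) 1)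
      (Pi.single (coordPairEquiv n (k, f 1)) 1) = ((sign f : ℤ) : ℝ) • ξ k := by
  rw [curv_zero, Finset.sum_eq_single k]
  · simp only [← coordPairEquiv_zero, ← coordPairEquiv_one, single_coordPairEquiv_apply]
    have perm_fin_two : ∀ f : Perm (Fin 2), f = 1 ∨ f = swap 0 1 := by decide
    rcases perm_fin_two f with rfl | rfl <;> simp
  · intro m _ hm
    simp [← coordPairEquiv_zero, ← coordPairEquiv_one, hm]
  · simp

noncomputable def frameTerm (σ : Perm (Fin n × Fin 2)) : ℝ :=
  ((sign σ : ℤ) : ℝ) * ω fun m => curv 𝔤 n ξ 0 (Pi.single (coordPairEquiv n (σ (m, 0))) 1)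
    (Pi.single (coordPairEquiv n (σ (m, 1))) 1)

lemma chernWeilForm_zero_single_eq_sum_frameTerm :
    chernWeilForm 𝔤 n ξ ω 0 (fun i => Pi.single i 1) =
      ((2 : ℝ) ^ n)⁻¹ * ∑ σ, frameTerm 𝔤 n ξ ω σ := by
  rw [chernWeilForm, ← (coordPairEquiv n).permCongr.sum_comp]
  simp only [frameTerm, sign_permCongr, permCongr_apply, ← coordPairEquiv_zero,
    ← coordPairEquiv_one, symm_apply_apply]

lemma frameTerm_eq_zero {σ : Perm (Fin n × Fin 2)}
    (hσ : σ ∉ Set.range (Function.uncurry wreath)) : frameTerm 𝔤 n ξ ω σ = 0 := by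
  obtain ⟨m, hm⟩ : ∃ m, (σ (m, 0)).1 ≠ (σ (m, 1)).1 := by
    by_contra! h
    obtain ⟨τ, f, rfl⟩ := exists_wreath_eq σ fun a b b' => by
      fin_cases b <;> fin_cases b' <;> simp [h]
    exact hσ ⟨(τ, f), rfl⟩
  rw [frameTerm, ω.map_coord_zero m (curv_zero_single_of_fst_ne 𝔤 n ξ hm), mul_zero]

lemma frameTerm_wreath (hsym : ∀ (σ : Perm (Fin n)) (c : Fin n → 𝔤), ω (c ∘ σ) = ω c)
    (τ : Perm (Fin n)) (f : Fin n → Perm (Fin 2)) :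
    frameTerm 𝔤 n ξ ω (wreath τ f) = ω ξ := by
  set u : ℤˣ := ∏ m, sign (f m)
  have hsign : sign (wreath τ f) = u := by
    rw [sign_wreath, Fintype.card_fin, Int.units_sq, one_mul]
  have hcurv (m : Fin n) : curv 𝔤 n ξ 0 (Pi.single (coordPairEquiv n (wreath τ f (m, 0))) 1)
      (Pi.single (coordPairEquiv n (wreath τ f (m, 1))) 1) = ((sign (f m) : ℤ) : ℝ) • ξ (τ m) :=
    curv_zero_single_perm 𝔤 n ξ (τ m) (f m)
  have hu : ∏ m, ((sign (f m) : ℤ) : ℝ) = ((u : ℤ) : ℝ) := by push_cast [u]; rfl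
  rw [frameTerm, hsign, funext hcurv, ω.map_smul_univ, hu, smul_eq_mul, ← mul_assoc,
    ← Int.cast_mul, ← Units.val_mul, Int.units_mul_self, Units.val_one, Int.cast_one, one_mul]
  exact hsym τ ξ

lemma chernWeilForm_zero_single
    (hsym : ∀ (σ : Perm (Fin n)) (c : Fin n → 𝔤), ω (c ∘ σ) = ω c) :
    chernWeilForm 𝔤 n ξ ω 0 (fun i => Pi.single i 1) = n.factorial * ω ξ := by
  rw [chernWeilForm_zero_single_eq_sum_frameTerm,
    ← Fintype.sum_of_injective _ wreath_injective (fun _ => ω ξ) _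
      (fun _ hσ => frameTerm_eq_zero 𝔤 n ξ ω hσ)
      (fun p => (frameTerm_wreath 𝔤 n ξ ω hsym p.1 p.2).symm)]
  simp only [Finset.sum_const, Finset.card_univ, Fintype.card_prod, Fintype.card_perm,
    Fintype.card_fin, Fintype.card_pi, Nat.factorial_two, Finset.prod_const, nsmul_eq_mul,
    Nat.cast_mul, Nat.cast_pow, Nat.cast_ofNat]
  field_simp

end

theorem chern_weil_evaluation_and_injectivity
    (n : ℕ) (ξ : Fin n → 𝔤)
    (ω : MultilinearMap ℝ (fun _ : Fin n => 𝔤) ℝ)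
    (hsym : ∀ (σ : Equiv.Perm (Fin n)) (c : Fin n → 𝔤), ω (c ∘ σ) = ω c)
    (hω : ω ξ ≠ 0) :
    chernWeilForm 𝔤 n ξ ω 0 (fun i => Pi.single i 1) = (n.factorial : ℝ) * ω ξ ∧
    chernWeilForm 𝔤 n ξ ω 0 (fun i => Pi.single i 1) ≠ 0 ∧
    (∀ ω' : MultilinearMap ℝ (fun _ : Fin n => 𝔤) ℝ,
      (∀ (σ : Equiv.Perm (Fin n)) (c : Fin n → 𝔤), ω' (c ∘ σ) = ω' c) →
      (∀ (c : Fin n → 𝔤) (x : Fin (2 * n) → ℝ) (v : Fin (2 * n) → Fin (2 * n) → ℝ),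
        chernWeilForm 𝔤 n c ω' x v = 0) →
      ω' = 0) := by
  have hfac : (n.factorial : ℝ) ≠ 0 := Nat.cast_ne_zero.mpr n.factorial_ne_zero
  refine ⟨chernWeilForm_zero_single 𝔤 n ξ ω hsym, ?_, fun ω' hsym' hvanish => ?_⟩
  · rw [chernWeilForm_zero_single 𝔤 n ξ ω hsym]
    exact mul_ne_zero hfac hω
  · ext c
    have hc := hvanish c 0 fun i => Pi.single i 1
    rw [chernWeilForm_zero_single 𝔤 n c ω' hsym'] at hc
    exact (mul_eq_zero.mp hc).resolve_left hfac
end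

section
/- There is a short exact sequence 0 → Ω_G^{n−1}(M;V)/Ω_G^{n−1}(M;V)_Λ → ĤG^n(M;Λ) → H_G^n(M;Λ) → 0, where the right map is the characteristic class map. -/
/-- Abstract model of the data underlying the Hopkins–Singer style differential
equivariant cochain complex `ČG(q)(M;Λ)` for a compact Lie group `G` acting on a
smooth manifold `M`:
* `CΛ k = C^k(EG ×_G M; Λ)` are singular cochains on the Borel construction with
  coefficients in the totally disconnected subgroup `Λ ⊆ V`;
* `C k = C^k(EG ×_G M; V)`;
* `D k = C^k(EG ×_G M; V/Λ)`;
* `Ω k = Ω_G^k(M; V)` is the Weil model of equivariant differential forms,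
  included into `C` via the Weil homomorphism `j` for a universal connection on
  `EG`;
* `δ` is the singular coboundary and `d_G` the equivariant de Rham
  differential. -/
structure EquivariantHSData (CΛ C D Ω : ℤ → Type)
    [∀ k, AddCommGroup (CΛ k)] [∀ k, AddCommGroup (C k)]
    [∀ k, AddCommGroup (D k)] [∀ k, AddCommGroup (Ω k)] where
  δΛ : ∀ k, CΛ k →+ CΛ (k + 1)
  δ : ∀ k, C k →+ C (k + 1)
  δD : ∀ k, D k →+ D (k + 1)
  dG : ∀ k, Ω k →+ Ω (k + 1)
  δΛ_sq : ∀ k x, δΛ (k + 1) (δΛ k x) = 0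
  δ_sq : ∀ k x, δ (k + 1) (δ k x) = 0
  δD_sq : ∀ k x, δD (k + 1) (δD k x) = 0
  dG_sq : ∀ k x, dG (k + 1) (dG k x) = 0
  /-- the inclusion of `Λ`-cochains into `V`-cochains -/
  ι : ∀ k, CΛ k →+ C k
  /-- the inclusion of equivariant forms as singular cochains (Weil homomorphism) -/
  j : ∀ k, Ω k →+ C k
  /-- the reduction of `V`-cochains modulo `Λ` -/
  pr : ∀ k, C k →+ D k
  ι_δ : ∀ k x, ι (k + 1) (δΛ k x) = δ k (ι k x)
  j_d : ∀ k x, j (k + 1) (dG k x) = δ k (j k x)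
  pr_δ : ∀ k x, pr (k + 1) (δ k x) = δD k (pr k x)

variable {CΛ C D Ω : ℤ → Type}
  [∀ k, AddCommGroup (CΛ k)] [∀ k, AddCommGroup (C k)]
  [∀ k, AddCommGroup (D k)] [∀ k, AddCommGroup (Ω k)]


variable (dat : EquivariantHSData CΛ C D Ω)

/-- the differential `d(c,h,ω) = (δc, ω - c - δh, d_Gω)` of `ČG(M;Λ)`, on the
component of degree `a+1` (middle cochain of degree `a`), as an additive map -/
def dHSHom (a : ℤ) :
    (CΛ (a + 1) × C a × Ω (a + 1)) →+ (CΛ (a + 1 + 1) × C (a + 1) × Ω (a + 1 + 1)) :=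
  AddMonoidHom.mk'
    (fun x => (dat.δΛ _ x.1, dat.j _ x.2.2 - dat.ι _ x.1 - dat.δ _ x.2.1, dat.dG _ x.2.2))
    (by
      rintro ⟨c₁, h₁, ω₁⟩ ⟨c₂, h₂, ω₂⟩
      simp only [Prod.fst_add, Prod.snd_add, Prod.mk_add_mk, Prod.mk.injEq, map_add]
      exact ⟨by trivial, by abel, by simp⟩)

/-- the differential applied to the flat (`ω = 0`) part
`ČG(n)^{n-1} = {(c, h, 0)}` one degree down: `(c,h) ↦ d(c,h,0) = (δc, -c-δh, 0)` -/
def bHom (a : ℤ) :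
    (CΛ (a + 1) × C a) →+ (CΛ (a + 1 + 1) × C (a + 1) × Ω (a + 1 + 1)) :=
  AddMonoidHom.mk'
    (fun x => (dat.δΛ _ x.1, - dat.ι _ x.1 - dat.δ _ x.2, 0))
    (by
      rintro ⟨c₁, h₁⟩ ⟨c₂, h₂⟩
      simp only [Prod.fst_add, Prod.snd_add, Prod.mk_add_mk, Prod.mk.injEq, map_add]
      exact ⟨by trivial, by abel, by simp⟩)

/-- the differential equivariant cohomology
`ĤG^{a+2}(M;Λ) = Z^{a+2} / d ČG^{a+1}_{flat}` -/
def Hhat (a : ℤ) : Type :=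
  (dHSHom dat (a + 1)).ker ⧸ ((bHom dat a).range.addSubgroupOf (dHSHom dat (a + 1)).ker)

noncomputable instance (a : ℤ) : AddCommGroup (Hhat dat a) := by
  unfold Hhat; infer_instance

/-- Borel equivariant cohomology `H_G^{a+1}(M; V/Λ)`, computed from the
`V/Λ`-cochain complex `D` -/
def HD (a : ℤ) : Type :=
  (dat.δD (a + 1)).ker ⧸ ((dat.δD a).range.addSubgroupOf (dat.δD (a + 1)).ker)

noncomputable instance (a : ℤ) : AddCommGroup (HD dat a) := by
  unfold HD; infer_instance

/-- Borel equivariant cohomology `H_G^{a+2}(M; Λ)`, computed from the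
`Λ`-cochain complex `CΛ` -/
def HL (a : ℤ) : Type :=
  (dat.δΛ (a + 1 + 1)).ker ⧸ ((dat.δΛ (a + 1)).range.addSubgroupOf (dat.δΛ (a + 1 + 1)).ker)

noncomputable instance (a : ℤ) : AddCommGroup (HL dat a) := by
  unfold HL; infer_instance

/-- the subgroup `Ω_G^{a+1}(M;V)_Λ` of closed equivariant forms with `Λ`-periods -/
def periods (a : ℤ) : AddSubgroup (Ω (a + 1)) where
  carrier := {ω | dat.dG (a + 1) ω = 0 ∧ ∃ (c : CΛ (a + 1)) (b : C a),
      dat.j (a + 1) ω = dat.ι (a + 1) c + dat.δ a b}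
  add_mem' := by
    rintro x y ⟨hx, cx, bx, hx2⟩ ⟨hy, cy, byy, hy2⟩
    refine ⟨by simp [map_add, hx, hy], cx + cy, bx + byy, ?_⟩
    simp only [map_add, hx2, hy2]
    abel
  zero_mem' := ⟨by simp, 0, 0, by simp⟩
  neg_mem' := by
    rintro x ⟨hx, cx, bx, hx2⟩
    exact ⟨by simp [map_neg, hx], -cx, -bx, by simp only [map_neg, hx2]; abel⟩

/-!
A class of `ĤG^n(M;Λ)` is represented by a cocycle `(c, h, ω)`: `δc = 0`, `ω = c + δh` and
`d_G ω = 0`; its characteristic class is `[c]`. A form `ω` gives the cocycle `(0, ω, d_G ω)`,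
which is a flat coboundary `d(c', h', 0)` exactly when `ω` is closed with `Λ`-periods.
Since `j` is a quasi-isomorphism, an integral cocycle `c` is cohomologous over `V` to a closed
form `ω`, `c = ω + δb`, and `(c, -b, ω)` is a cocycle with characteristic class `[c]`. If the
characteristic class of `(c, h, ω)` vanishes, `c = δc'`, then `ω = δ(c' + h)` is exact,
`ω = d_G α`, so `c' + h - α` is closed and equals `ω' + δb`; then `(c, h, ω)` differs from the
form cocycle of `α + ω'` by the flat coboundary `d(-c', b, 0)`.
-/

lemma QuotientAddGroup.map_injective_of_comap_eq {G H : Type*} [AddGroup G] [AddGroup H]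
    {N : AddSubgroup G} [N.Normal] {M : AddSubgroup H} [M.Normal] (f : G →+ H)
    (h : M.comap f = N) : Function.Injective (QuotientAddGroup.map N M f h.ge) := by
  rw [← AddMonoidHom.ker_eq_bot_iff, QuotientAddGroup.ker_map, h, QuotientAddGroup.map_mk'_self]

def WeilSurjOnCohomology (k : ℤ) : Prop :=
  ∀ z : C (k + 1), dat.δ (k + 1) z = 0 →
    ∃ (ωf : Ω (k + 1)) (b : C k), dat.dG (k + 1) ωf = 0 ∧ z = dat.j (k + 1) ωf + dat.δ k b

def WeilInjOnCohomology (k : ℤ) : Prop :=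
  ∀ ωf : Ω (k + 1), dat.dG (k + 1) ωf = 0 →
    (∃ b : C k, dat.j (k + 1) ωf = dat.δ k b) → ∃ α : Ω k, ωf = dat.dG k α

section SES

variable (a : ℤ)

lemma mem_ker_dHSHom_iff (x : CΛ (a + 1 + 1) × C (a + 1) × Ω (a + 1 + 1)) :
    x ∈ (dHSHom dat (a + 1)).ker ↔
      dat.δΛ _ x.1 = 0 ∧ dat.j _ x.2.2 - dat.ι _ x.1 - dat.δ _ x.2.1 = 0 ∧
        dat.dG _ x.2.2 = 0 := by
  simp [dHSHom, Prod.ext_iff]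

abbrev flatCoboundaries : AddSubgroup (dHSHom dat (a + 1)).ker :=
  (bHom dat a).range.addSubgroupOf (dHSHom dat (a + 1)).ker

lemma mem_flatCoboundaries_iff (x : (dHSHom dat (a + 1)).ker) :
    x ∈ flatCoboundaries dat a ↔
      ∃ (c : CΛ (a + 1)) (h : C a),
        (dat.δΛ _ c, -dat.ι _ c - dat.δ _ h, 0) = x.val := by
  simp [AddSubgroup.mem_addSubgroupOf, bHom]

def formCocycle : Ω (a + 1) →+ (dHSHom dat (a + 1)).ker :=
  AddMonoidHom.mk'
    (fun ω => ⟨(0, dat.j _ ω, dat.dG _ ω), (mem_ker_dHSHom_iff dat a _).2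
      ⟨map_zero _, by simp [dat.j_d], dat.dG_sq _ _⟩⟩)
    (fun _ _ => Subtype.ext <| by simp)

@[simp]
lemma coe_formCocycle (ω : Ω (a + 1)) :
    (formCocycle dat a ω).val = (0, dat.j _ ω, dat.dG _ ω) :=
  rfl

def charClass : (dHSHom dat (a + 1)).ker →+ HL dat a :=
  (QuotientAddGroup.mk' _).comp <|
    ((AddMonoidHom.fst _ _).comp (dHSHom dat (a + 1)).ker.subtype).codRestrict _
      fun x => ((mem_ker_dHSHom_iff dat a x).1 x.2).1

lemma charClass_eq_zero_iff (x : (dHSHom dat (a + 1)).ker) :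
    charClass dat a x = 0 ↔ x.val.1 ∈ (dat.δΛ (a + 1)).range :=
  (QuotientAddGroup.eq_zero_iff _).trans AddSubgroup.mem_addSubgroupOf

lemma flatCoboundaries_le_ker_charClass : flatCoboundaries dat a ≤ (charClass dat a).ker := by
  intro x hx
  obtain ⟨c, _, hc⟩ := (mem_flatCoboundaries_iff dat a x).1 hx
  exact (charClass_eq_zero_iff dat a x).2 ⟨c, congrArg Prod.fst hc⟩

lemma charClass_formCocycle (ω : Ω (a + 1)) : charClass dat a (formCocycle dat a ω) = 0 :=
  (charClass_eq_zero_iff dat a _).2 ⟨0, map_zero _⟩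

lemma δΛ_eq_zero_of_j_eq_ι_add_δ (hι : Function.Injective (dat.ι (a + 1 + 1)))
    {ω : Ω (a + 1)} {c : CΛ (a + 1)} {b : C a} (hω : dat.dG _ ω = 0)
    (h : dat.j _ ω = dat.ι _ c + dat.δ _ b) : dat.δΛ _ c = 0 := by
  refine hι ?_
  calc dat.ι _ (dat.δΛ _ c) = dat.δ _ (dat.ι _ c) := dat.ι_δ _ _
    _ = dat.δ _ (dat.j _ ω) - dat.δ _ (dat.δ _ b) := by rw [h, map_add, add_sub_cancel_right]
    _ = 0 := by rw [← dat.j_d, hω, map_zero, dat.δ_sq, sub_zero]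
    _ = dat.ι _ 0 := (map_zero _).symm

lemma comap_formCocycle_flatCoboundaries (hι : Function.Injective (dat.ι (a + 1 + 1))) :
    (flatCoboundaries dat a).comap (formCocycle dat a) = periods dat a := by
  ext ω
  rw [AddSubgroup.mem_comap, mem_flatCoboundaries_iff, coe_formCocycle]
  simp only [Prod.mk.injEq]
  constructor
  · rintro ⟨c, h, -, hj, hω⟩
    exact ⟨hω.symm, -c, -h, by rw [← hj, map_neg, map_neg, sub_eq_add_neg]⟩
  · rintro ⟨hω, c, b, hj⟩
    refine ⟨-c, -b, ?_, ?_, hω.symm⟩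
    · rw [map_neg, δΛ_eq_zero_of_j_eq_ι_add_δ dat a hι hω hj, neg_zero]
    · rw [hj, map_neg, map_neg, neg_neg, sub_neg_eq_add]

lemma charClass_surjective (hsurj : WeilSurjOnCohomology dat (a + 1)) :
    Function.Surjective (charClass dat a) := by
  rintro ⟨c, hc : dat.δΛ _ c = 0⟩
  obtain ⟨ω, b, hω, hcω⟩ := hsurj (dat.ι _ c) (by rw [← dat.ι_δ, hc, map_zero])
  refine ⟨⟨(c, -b, ω), (mem_ker_dHSHom_iff dat a _).2 ⟨hc, ?_, hω⟩⟩, rfl⟩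
  rw [map_neg, hcω]
  abel

lemma exists_formCocycle_sub_mem_flatCoboundaries (hinj : WeilInjOnCohomology dat (a + 1))
    (hsurj : WeilSurjOnCohomology dat a) (y : (dHSHom dat (a + 1)).ker)
    (hy : charClass dat a y = 0) :
    ∃ ω, formCocycle dat a ω - y ∈ flatCoboundaries dat a := by
  obtain ⟨⟨c, h, ω⟩, hker⟩ := y
  obtain ⟨-, hcocycle, hω⟩ := (mem_ker_dHSHom_iff dat a _).1 hker
  obtain ⟨c', rfl⟩ := (charClass_eq_zero_iff dat a _).1 hy
  have hωexact : dat.j _ ω = dat.δ _ (dat.ι _ c' + h) := by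
    rw [map_add, ← dat.ι_δ, ← sub_eq_zero, ← hcocycle]
    abel
  obtain ⟨α, rfl⟩ := hinj ω hω ⟨_, hωexact⟩
  obtain ⟨ω', b, hω', hclosed⟩ := hsurj (dat.ι _ c' + h - dat.j _ α)
    (by rw [map_sub, ← hωexact, dat.j_d, sub_self])
  refine ⟨α + ω', (mem_flatCoboundaries_iff dat a _).2 ⟨-c', b, ?_⟩⟩
  obtain rfl : h = dat.j _ ω' + dat.δ _ b + dat.j _ α - dat.ι _ c' := by
    rw [← hclosed]
    abel
  ext
  · simp
  · simp only [map_neg, neg_neg, map_add, AddSubgroupClass.coe_sub, AddSubgroup.coe_add,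
      coe_formCocycle, Prod.mk_add_mk, add_zero, Prod.mk_sub_mk, zero_sub, add_sub_cancel_left]
    abel
  · simp [hω']

end SES

theorem ses_characteristic_class
    (hι_inj : ∀ k, Function.Injective (dat.ι k))
    (hqis_surj : ∀ (k : ℤ) (z : C (k + 1)), dat.δ (k + 1) z = 0 →
      ∃ (ωf : Ω (k + 1)) (b : C k),
        dat.dG (k + 1) ωf = 0 ∧ z = dat.j (k + 1) ωf + dat.δ k b)
    (hqis_inj : ∀ (k : ℤ) (ωf : Ω (k + 1)), dat.dG (k + 1) ωf = 0 →
      (∃ b : C k, dat.j (k + 1) ωf = dat.δ k b) → ∃ α : Ω k, ωf = dat.dG k α)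
    (a : ℤ) :
    ∃ (ib : (Ω (a + 1) ⧸ periods dat a) →+ Hhat dat a) (cc : Hhat dat a →+ HL dat a),
      Function.Injective ib ∧
      Function.Surjective cc ∧
      (∀ x : Hhat dat a, cc x = 0 ↔ x ∈ Set.range ib) := by
  have hperiods := comap_formCocycle_flatCoboundaries dat a (hι_inj _)
  refine ⟨QuotientAddGroup.map _ _ (formCocycle dat a) hperiods.ge,
    QuotientAddGroup.lift _ (charClass dat a) (flatCoboundaries_le_ker_charClass dat a),
    ?_, QuotientAddGroup.lift_surjective_of_surjective _ _
      (charClass_surjective dat a (hqis_surj _)) _, ?_⟩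
  · exact QuotientAddGroup.map_injective_of_comap_eq _ hperiods
  · intro x
    induction x using QuotientAddGroup.induction_on with | H y => ?_
    refine ⟨fun hy => ?_, ?_⟩
    · obtain ⟨ω, hω⟩ := exists_formCocycle_sub_mem_flatCoboundaries dat a (hqis_inj _)
        (hqis_surj _) y hy
      exact ⟨ω, QuotientAddGroup.eq_iff_sub_mem.2 hω⟩
    · rintro ⟨ω, hω⟩
      induction ω using QuotientAddGroup.induction_on with | H ω => ?_
      rw [← hω]
      exact charClass_formCocycle dat a ω
end

section
/- For G compact, ĤG^{2k}(pt) ≅ H^{2k}(BG;ℤ) and ĤG^{2k+1}(pt) ≅ H^{2k}(BG;ℝ/ℤ). -/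
variable {CΛ C D Ω : ℤ → Type}
  [∀ k, AddCommGroup (CΛ k)] [∀ k, AddCommGroup (C k)]
  [∀ k, AddCommGroup (D k)] [∀ k, AddCommGroup (Ω k)]


variable (dat : EquivariantHSData CΛ C D Ω)

/-- For `G` compact and `M = pt`, `ĤG^{2k} ≅ H^{2k}(BG;ℤ)` and
`ĤG^{2k+1} ≅ H^{2k}(BG;ℝ/ℤ)`.  Here the degree is `n = a + 2`: `Hhat dat a` is
`ĤGⁿ(pt)`, `HL dat a` is `Hⁿ(BG;Λ) = Hⁿ(BG;ℤ)`, and `HD dat a` is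
`H^{n-1}(BG; V/Λ) = H^{n-1}(BG;ℝ/ℤ)`.  The hypothesis `hodd` records that for a
compact group the equivariant forms of a point vanish in odd degrees
(`Ω_G^{2k+1}(pt) = 0`, `Ω_G^{2k}(pt) = (S^k 𝔤*)^G ≅ H^{2k}(BG;ℝ)`). -/
theorem point_differential_cohomology
    (hodd : ∀ k : ℤ, Odd k → Subsingleton (Ω k))
    -- the short exact sequence `0 → H_G^{n-1}(V/Λ) → ĤGⁿ → Ω_G^n(V)_Λ → 0` (SES 1):
    (hSES1 : ∀ a : ℤ, ∃ (ib : HD dat a →+ Hhat dat a) (curv : Hhat dat a →+ Ω (a + 1 + 1)),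
      Function.Injective ib ∧
      (Set.range curv =
        {ω : Ω (a + 1 + 1) | dat.dG (a + 1 + 1) ω = 0 ∧
          ∃ (c : CΛ (a + 1 + 1)) (b : C (a + 1)),
            dat.j (a + 1 + 1) ω = dat.ι (a + 1 + 1) c + dat.δ (a + 1) b}) ∧
      (∀ x : Hhat dat a, curv x = 0 ↔ x ∈ Set.range ib))
    -- the short exact sequence `0 → Ω^{n-1}/Ω^{n-1}_Λ → ĤGⁿ → H_Gⁿ(Λ) → 0` (SES 2):
    (hSES2 : ∀ a : ℤ, ∃ (ib : (Ω (a + 1) ⧸ periods dat a) →+ Hhat dat a)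
        (cc : Hhat dat a →+ HL dat a),
      Function.Injective ib ∧ Function.Surjective cc ∧
      (∀ x : Hhat dat a, cc x = 0 ↔ x ∈ Set.range ib))
    (a : ℤ) :
    (Even (a + 2) → Nonempty (Hhat dat a ≃+ HL dat a)) ∧
    (Odd (a + 2) → Nonempty (Hhat dat a ≃+ HD dat a)) := by
  constructor
  · intro hev
    obtain ⟨ib, cc, hinj, hsurj, hex⟩ := hSES2 a
    have h1 : Odd (a + 1) := by
      rcases hev with ⟨m, hm⟩
      exact ⟨m - 1, by omega⟩
    have : Subsingleton (Ω (a + 1)) := hodd _ h1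
    have hq : Subsingleton (Ω (a + 1) ⧸ periods dat a) :=
      Quotient.instSubsingletonQuotient _
    have hccinj : Function.Injective cc := by
      rw [injective_iff_map_eq_zero]
      intro x hx
      obtain ⟨y, hy⟩ := (hex x).mp hx
      have : y = 0 := Subsingleton.elim y 0
      rw [this, map_zero] at hy
      exact hy.symm
    exact ⟨AddEquiv.ofBijective cc ⟨hccinj, hsurj⟩⟩
  · intro hodd'
    obtain ⟨ib, curv, hinj, hrange, hex⟩ := hSES1 a
    have : Subsingleton (Ω (a + 1 + 1)) := by
      apply hodd
      rcases hodd' with ⟨m, hm⟩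
      exact ⟨m, by omega⟩
    have hsurj : Function.Surjective ib := by
      intro x
      exact (hex x).mp (Subsingleton.elim _ _)
    exact ⟨(AddEquiv.ofBijective ib ⟨hinj, hsurj⟩).symm⟩
end

section
/- Let G be compact acting smoothly on M, and suppose a closed normal subgroup K of a compact group G̃ with G̃/K ≅ G acts with Q → M a G̃-equivariant principal K-bundle with invariant connection, constructed over a test manifold X from a principal G-bundle with connection (P, Θ_P) → X and an equivariant map f : P → M. Then the form Θ_{f*Q} = π_P*Θ_P ⊕ (f̃*Θ_Q − ι_{π_P*Θ_P} f̃*Θ_Q) ∈ Ω¹(f*Q) ⊗ (g ⊕ k) is a principal connection on the principal G̃-bundle f*Q → X: it is G̃-equivariant and satisfies ι_{ξ₁⊕ξ₂} Θ_{f*Q} = ξ₁ ⊕ ξ₂ for all ξ₁⊕ξ₂ ∈ g ⊕ k. -/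
/-!
Write the form as `α ⊕ (β - γ ∘ α)` with `α = π_P*Θ_P`, `β = f̃*Θ_Q` and `γ = Θ_Q ∘ fvQg`.
On the fundamental field of `ξ ⊕ ζ`, `α` returns `ξ` while `β` returns `γ ξ + ζ`: the
correction `γ ∘ α` removes exactly the part of `Θ_Q` seen by the `𝔤`-action, leaving `ζ`.
Equivariance is inherited from `α`, `β` and `γ`, each of which intertwines the actions because
it is built from equivariant forms and equivariant maps.
-/

/-- The 1-form `Θ_{f*Q} = π_P*Θ_P ⊕ (f̃*Θ_Q − ι_{π_P*Θ_P} f̃*Θ_Q) ∈ Ω¹(f*Q) ⊗ (𝔤 ⊕ 𝔨)`, with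
`G̃` modelled as `G × K`, tangent spaces trivialized as `VF`, `VP`, `VQ`, and the contraction
`ι_{π_P*Θ_P} f̃*Θ_Q` written out as `v ↦ Θ_Q (fvQg (Θ_P (dπP v)))`. -/
def pullbackConnection
    (𝔤 𝔨 : Type) [AddCommGroup 𝔤] [Module ℝ 𝔤] [AddCommGroup 𝔨] [Module ℝ 𝔨]
    (F P Q : Type)
    (VF VP VQ : Type) [AddCommGroup VF] [Module ℝ VF] [AddCommGroup VP] [Module ℝ VP]
    [AddCommGroup VQ] [Module ℝ VQ]
    (πP : F → P) (ftil : F → Q)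
    (dπP : F → VF →ₗ[ℝ] VP) (dftil : F → VF →ₗ[ℝ] VQ)
    (fvQg : Q → 𝔤 →ₗ[ℝ] VQ)
    (ΘP : P → VP →ₗ[ℝ] 𝔤) (ΘQ : Q → VQ →ₗ[ℝ] 𝔨) (x : F) :
    VF →ₗ[ℝ] 𝔤 × 𝔨 :=
  LinearMap.prod ((ΘP (πP x)).comp (dπP x))
    (((ΘQ (ftil x)).comp (dftil x)) -
      ((ΘQ (ftil x)).comp ((fvQg (ftil x)).comp ((ΘP (πP x)).comp (dπP x)))))

namespace LinearMap

variable {R V V' 𝔤 𝔤' 𝔨 𝔨' : Type*} [Semiring R]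
  [AddCommMonoid V] [Module R V] [AddCommMonoid V'] [Module R V']
  [AddCommMonoid 𝔤] [Module R 𝔤] [AddCommMonoid 𝔤'] [Module R 𝔤']
  [AddCommGroup 𝔨] [Module R 𝔨] [AddCommGroup 𝔨'] [Module R 𝔨']

def correctedProd (α : V →ₗ[R] 𝔤) (β : V →ₗ[R] 𝔨) (γ : 𝔤 →ₗ[R] 𝔨) : V →ₗ[R] 𝔤 × 𝔨 :=
  α.prod (β - γ ∘ₗ α)

theorem correctedProd_apply_eq_self {α : V →ₗ[R] 𝔤} {β : V →ₗ[R] 𝔨} {γ : 𝔤 →ₗ[R] 𝔨}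
    {fv : 𝔤 × 𝔨 →ₗ[R] V} (hα : ∀ ξζ, α (fv ξζ) = ξζ.1)
    (hβ : ∀ ξζ, β (fv ξζ) = γ ξζ.1 + ξζ.2) (ξζ : 𝔤 × 𝔨) :
    correctedProd α β γ (fv ξζ) = ξζ := by
  simp [correctedProd, hα, hβ]

theorem correctedProd_apply_map {α : V →ₗ[R] 𝔤} {β : V →ₗ[R] 𝔨} {γ : 𝔤 →ₗ[R] 𝔨}
    {α' : V' →ₗ[R] 𝔤'} {β' : V' →ₗ[R] 𝔨'} {γ' : 𝔤' →ₗ[R] 𝔨'}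
    {T : V →ₗ[R] V'} {a : 𝔤 →ₗ[R] 𝔤'} {b : 𝔨 →ₗ[R] 𝔨'}
    (hα : ∀ v, α' (T v) = a (α v)) (hβ : ∀ v, β' (T v) = b (β v))
    (hγ : ∀ ξ, γ' (a ξ) = b (γ ξ)) (v : V) :
    correctedProd α' β' γ' (T v) = prodMap a b (correctedProd α β γ v) := by
  simp [correctedProd, hα, hβ, hγ]

end LinearMap

open LinearMap in
theorem pullbackConnection_eq_correctedProd
    {𝔤 𝔨 : Type} [AddCommGroup 𝔤] [Module ℝ 𝔤] [AddCommGroup 𝔨] [Module ℝ 𝔨]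
    {F P Q VF VP VQ : Type} [AddCommGroup VF] [Module ℝ VF] [AddCommGroup VP] [Module ℝ VP]
    [AddCommGroup VQ] [Module ℝ VQ]
    (πP : F → P) (ftil : F → Q) (dπP : F → VF →ₗ[ℝ] VP) (dftil : F → VF →ₗ[ℝ] VQ)
    (fvQg : Q → 𝔤 →ₗ[ℝ] VQ) (ΘP : P → VP →ₗ[ℝ] 𝔤) (ΘQ : Q → VQ →ₗ[ℝ] 𝔨) (x : F) :
    pullbackConnection 𝔤 𝔨 F P Q VF VP VQ πP ftil dπP dftil fvQg ΘP ΘQ x =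
      correctedProd (ΘP (πP x) ∘ₗ dπP x) (ΘQ (ftil x) ∘ₗ dftil x) (ΘQ (ftil x) ∘ₗ fvQg (ftil x)) :=
  rfl

/-- The form
`Θ_{f*Q} = π_P*Θ_P ⊕ (f̃*Θ_Q − ι_{π_P*Θ_P} f̃*Θ_Q) ∈ Ω¹(f*Q) ⊗ (𝔤 ⊕ 𝔨)` is a
principal connection on the principal `G̃`-bundle `f*Q → X`: it is
`G̃`-equivariant and satisfies `ι_{ξ₁⊕ξ₂} Θ_{f*Q} = ξ₁ ⊕ ξ₂` for all
`ξ₁ ⊕ ξ₂ ∈ 𝔤 ⊕ 𝔨`. -/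
theorem pullback_connection_is_principal
    (G K : Type) [Group G] [Group K]
    (𝔤 𝔨 : Type) [AddCommGroup 𝔤] [Module ℝ 𝔤] [AddCommGroup 𝔨] [Module ℝ 𝔨]
    (F P Q : Type)
    (VF VP VQ : Type) [AddCommGroup VF] [Module ℝ VF] [AddCommGroup VP] [Module ℝ VP]
    [AddCommGroup VQ] [Module ℝ VQ]
    (πP : F → P) (ftil : F → Q)
    (dπP : F → VF →ₗ[ℝ] VP) (dftil : F → VF →ₗ[ℝ] VQ)
    (actF : F → G × K → F) (actP : P → G → P) (actQ : Q → G × K → Q)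
    (dactF : F → G × K → VF ≃ₗ[ℝ] VF) (dactP : P → G → VP ≃ₗ[ℝ] VP)
    (dactQ : Q → G × K → VQ ≃ₗ[ℝ] VQ)
    (fvF : F → (𝔤 × 𝔨) →ₗ[ℝ] VF) (fvP : P → 𝔤 →ₗ[ℝ] VP)
    (fvQg : Q → 𝔤 →ₗ[ℝ] VQ) (fvQk : Q → 𝔨 →ₗ[ℝ] VQ)
    (AdG : G → 𝔤 ≃ₗ[ℝ] 𝔤) (AdK : K → 𝔨 ≃ₗ[ℝ] 𝔨)
    (ΘP : P → VP →ₗ[ℝ] 𝔤) (ΘQ : Q → VQ →ₗ[ℝ] 𝔨)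
    -- `Θ_P` is a principal connection on `P`:
    (hΘP_fv : ∀ (p : P) (ξ : 𝔤), ΘP p (fvP p ξ) = ξ)
    (hΘP_equiv : ∀ (p : P) (g : G) (w : VP),
      ΘP (actP p g) (dactP p g w) = AdG g⁻¹ (ΘP p w))
    -- `Θ_Q` is a `G`-invariant principal `K`-connection on `Q`
    -- (`Θ_Q ∈ (Ω¹(Q) ⊗ 𝔨)^{G×K}`):
    (hΘQ_fvk : ∀ (q : Q) (ζ : 𝔨), ΘQ q (fvQk q ζ) = ζ)
    (hΘQ_equiv : ∀ (q : Q) (gk : G × K) (u : VQ),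
      ΘQ (actQ q gk) (dactQ q gk u) = AdK gk.2⁻¹ (ΘQ q u))
    -- compatibilities of the pullback `F = f*Q` with projections and actions:
    (hπ_act : ∀ (x : F) (gk : G × K), πP (actF x gk) = actP (πP x) gk.1)
    (hf_act : ∀ (x : F) (gk : G × K), ftil (actF x gk) = actQ (ftil x) gk)
    (hdπ_act : ∀ (x : F) (gk : G × K) (v : VF),
      dπP (actF x gk) (dactF x gk v) = dactP (πP x) gk.1 (dπP x v))
    (hdf_act : ∀ (x : F) (gk : G × K) (v : VF),
      dftil (actF x gk) (dactF x gk v) = dactQ (ftil x) gk (dftil x v))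
    (hfv_π : ∀ (x : F) (ξζ : 𝔤 × 𝔨), dπP x (fvF x ξζ) = fvP (πP x) ξζ.1)
    (hfv_f : ∀ (x : F) (ξζ : 𝔤 × 𝔨),
      dftil x (fvF x ξζ) = fvQg (ftil x) ξζ.1 + fvQk (ftil x) ξζ.2)
    (hfvQg_equiv : ∀ (q : Q) (gk : G × K) (ξ : 𝔤),
      dactQ q gk (fvQg q ξ) = fvQg (actQ q gk) (AdG gk.1⁻¹ ξ)) :
    (∀ (x : F) (ξζ : 𝔤 × 𝔨),
      pullbackConnection 𝔤 𝔨 F P Q VF VP VQ πP ftil dπP dftil fvQg ΘP ΘQ x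
        (fvF x ξζ) = ξζ) ∧
    (∀ (x : F) (gk : G × K) (v : VF),
      pullbackConnection 𝔤 𝔨 F P Q VF VP VQ πP ftil dπP dftil fvQg ΘP ΘQ
          (actF x gk) (dactF x gk v) =
        (LinearMap.prodMap (AdG gk.1⁻¹).toLinearMap (AdK gk.2⁻¹).toLinearMap)
          (pullbackConnection 𝔤 𝔨 F P Q VF VP VQ πP ftil dπP dftil fvQg ΘP ΘQ x v)) := by
  simp only [pullbackConnection_eq_correctedProd]
  refine ⟨fun x => LinearMap.correctedProd_apply_eq_self (fun ξζ => ?_) (fun ξζ => ?_),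
    fun x gk => LinearMap.correctedProd_apply_map (fun v => ?_) (fun v => ?_) (fun ξ => ?_)⟩
  · simp [hfv_π, hΘP_fv]
  · simp [hfv_f, hΘQ_fvk]
  · simp [hπ_act, hdπ_act, hΘP_equiv]
  · simp [hf_act, hdf_act, hΘQ_equiv]
  · simp [hf_act, ← hfvQg_equiv, hΘQ_equiv]
end
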